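/- The codebook $\mathcal{S} = \{[\mathbf{s}_1, \mathbf{s}_2] \in \mathbb{C}^{K\times 2} : \mathbf{s}_1 = (1/\sqrt{p_1}, \ldots, 1/\sqrt{p_K})^T, \; \mathbf{s}_2 = (\sqrt{p_1} s_1, \ldots, \sqrt{p_K} s_K)^T, \; s_k \in \mathcal{X}_k\}$, where $\{\mathcal{X}_k\}$ is a UDCG and $p_k > 0$ are fixed, satisfies the uniquely-factorable property: if $\mathbf{S}, \tilde{\mathbf{S}} \in \mathcal{S}$ and $\mathbf{S}^H\mathbf{S} = \tilde{\mathbf{S}}^H\tilde{\mathbf{S}}$, then $\mathbf{S} = \tilde{\mathbf{S}}$. -/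

import Mathlib

open Matrix

/-- The `k`-th 4-QAM sub-constellation (indexed by `i = k - 1`). -/
def subConstellation (d : ℝ) (i : ℕ) : Set ℂ :=
  {z | ∃ s₁ s₂ : ℝ, (s₁ = 1 ∨ s₁ = -1) ∧ (s₂ = 1 ∨ s₂ = -1) ∧
    z = ((s₁ / 2 : ℝ) + (s₂ / 2 : ℝ) * Complex.I) * ((2 : ℝ) ^ i * d)}

/-- A codeword of the QAM-division codebook: first column `(1/√p_k)_k`,
second column `(√p_k s_k)_k`. -/
noncomputable def codeword (K : ℕ) (p : Fin K → ℝ) (s : Fin K → ℂ) :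
    Matrix (Fin K) (Fin 2) ℂ :=
  Matrix.of fun k t =>
    if t = 0 then ((1 / Real.sqrt (p k) : ℝ) : ℂ)
    else ((Real.sqrt (p k) : ℝ) : ℂ) * s k

lemma star_inv_sqrt_mul_sqrt_mul {p : ℝ} (hp : 0 < p) (z : ℂ) :
    star ((1 / Real.sqrt p : ℝ) : ℂ) * ((Real.sqrt p : ℝ) : ℂ) * z = z := by
  have hsqrt : Real.sqrt p ≠ 0 := (Real.sqrt_pos.mpr hp).ne'
  rw [Complex.star_def, Complex.conj_ofReal, ← Complex.ofReal_mul, one_div,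
    inv_mul_cancel₀ hsqrt, Complex.ofReal_one, one_mul]

lemma conjTranspose_mul_self_codeword_zero_one {K : ℕ} {p : Fin K → ℝ} (hp : ∀ k, 0 < p k)
    (s : Fin K → ℂ) : ((codeword K p s)ᴴ * codeword K p s) 0 1 = ∑ k, s k := by
  simp only [mul_apply, conjTranspose_apply, codeword, of_apply, if_pos, one_ne_zero, if_false,
    ← mul_assoc, star_inv_sqrt_mul_sqrt_mul (hp _)]

theorem stmt10_general (K : ℕ) (p : Fin K → ℝ) (hp : ∀ k, 0 < p k)
    (d : ℝ)
    (hUDCG : ∀ s stil : Fin K → ℂ,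
      (∀ i : Fin K, s i ∈ subConstellation d i.val) →
      (∀ i : Fin K, stil i ∈ subConstellation d i.val) →
      ∑ i, s i = ∑ i, stil i → s = stil)
    (s stil : Fin K → ℂ)
    (hs : ∀ i : Fin K, s i ∈ subConstellation d i.val)
    (hstil : ∀ i : Fin K, stil i ∈ subConstellation d i.val) :
    (codeword K p s)ᴴ * codeword K p s = (codeword K p stil)ᴴ * codeword K p stil →
      codeword K p s = codeword K p stil := by
  intro hgram
  have hsum : ∑ i, s i = ∑ i, stil i := by
    rw [← conjTranspose_mul_self_codeword_zero_one hp, hgram,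
      conjTranspose_mul_self_codeword_zero_one hp]
  rw [hUDCG s stil hs hstil hsum]

/-- The QAM-division codebook is uniquely factorable: Gram-matrix equality of two
codewords implies their equality, given the UDCG property of the `𝒳_k`. -/
theorem stmt10 (K : ℕ) (hK : 0 < K) (p : Fin K → ℝ) (hp : ∀ k, 0 < p k)
    (d : ℝ) (hd : 0 < d)
    (hUDCG : ∀ s stil : Fin K → ℂ,
      (∀ i : Fin K, s i ∈ subConstellation d i.val) →
      (∀ i : Fin K, stil i ∈ subConstellation d i.val) →
      ∑ i, s i = ∑ i, stil i → s = stil)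
    (s stil : Fin K → ℂ)
    (hs : ∀ i : Fin K, s i ∈ subConstellation d i.val)
    (hstil : ∀ i : Fin K, stil i ∈ subConstellation d i.val) :
    (codeword K p s)ᴴ * codeword K p s = (codeword K p stil)ᴴ * codeword K p stil →
      codeword K p s = codeword K p stil :=
  stmt10_general K p hp d hUDCG s stil hs hstil
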